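/- Let R ∈ (0, 1/2) and γ ∈ [0,1) with γ < 2R, and for each integer n ≥ 1 let Yₙ be the unique real number satisfying γ·Φ(Yₙ) + (1−γ)·Φ(√n·Yₙ) = R. Then Yₙ → 0 (equivalently Φ(Yₙ) → 1/2) and Φ(√n·Yₙ) → (R − γ/2)/(1−γ) as n → ∞. -/

import Mathlib

open MeasureTheory ProbabilityTheory Real Filter

/-- The cdf `Φ` of the standard normal distribution. -/
noncomputable def stdNormalCDF (x : ℝ) : ℝ := ProbabilityTheory.cdf (gaussianReal 0 1) x

lemma gaussianReal_singleton (x : ℝ) : gaussianReal 0 1 {x} = 0 :=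
  gaussianReal_absolutelyContinuous 0 one_ne_zero (Real.volume_singleton)

lemma stdNormalCDF_monotone : Monotone stdNormalCDF :=
  monotone_cdf (gaussianReal 0 1)

lemma stdNormalCDF_continuous : Continuous stdNormalCDF := by
  rw [continuous_iff_continuousAt]
  intro x
  have hmono : Monotone stdNormalCDF := stdNormalCDF_monotone
  rw [hmono.continuousAt_iff_leftLim_eq_rightLim]
  have hr : Function.rightLim stdNormalCDF x = stdNormalCDF x :=
    (cdf (gaussianReal 0 1)).rightLim_eq x
  have hsing : (cdf (gaussianReal 0 1)).measure {x} = 0 := by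
    rw [measure_cdf]; exact gaussianReal_singleton x
  rw [StieltjesFunction.measure_singleton] at hsing
  have h1 : stdNormalCDF x - Function.leftLim stdNormalCDF x ≤ 0 :=
    ENNReal.ofReal_eq_zero.mp hsing
  have h2 : Function.leftLim stdNormalCDF x ≤ stdNormalCDF x := hmono.leftLim_le le_rfl
  have : Function.leftLim stdNormalCDF x = stdNormalCDF x := by linarith
  rw [this, hr]

lemma stdNormalCDF_zero : stdNormalCDF 0 = 1 / 2 := by
  set μ := gaussianReal 0 1 with hμ
  have hmap : μ.map (fun x => -x) = μ := by
    have h := gaussianReal_map_const_mul (μ := 0) (v := 1) (-1)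
    have h2 : (⟨(-1 : ℝ) ^ 2, sq_nonneg _⟩ : NNReal) = 1 := by
      refine Subtype.ext ?_; norm_num
    simp only [neg_one_mul, mul_zero, h2, mul_one] at h
    exact h.trans (congrArg (gaussianReal 0) (NNReal.eq (by norm_num)))
  have hIic : μ (Set.Iic 0) = μ (Set.Ici 0) := by
    conv_lhs => rw [← hmap]
    rw [Measure.map_apply measurable_neg measurableSet_Iic]
    congr 1
    ext y
    simp
  have hIoi : μ (Set.Ici 0) = μ (Set.Ioi 0) := by
    refine le_antisymm ?_ (measure_mono Set.Ioi_subset_Ici_self)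
    rw [← Set.Ioi_union_left]
    exact (measure_union_le _ _).trans (by rw [gaussianReal_singleton, add_zero])
  have hcompl : μ (Set.Iic 0) + μ (Set.Ioi 0) = 1 := by
    rw [← Set.compl_Iic]
    rw [measure_add_measure_compl measurableSet_Iic]
    exact measure_univ
  have key : μ (Set.Iic 0) + μ (Set.Iic 0) = 1 := by
    have k := hcompl
    rw [← hIoi, ← hIic] at k
    exact k
  have hfin : μ (Set.Iic 0) ≠ ⊤ := measure_ne_top _ _
  have hreal : (μ (Set.Iic 0)).toReal + (μ (Set.Iic 0)).toReal = 1 := by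
    rw [← ENNReal.toReal_add hfin hfin, key, ENNReal.toReal_one]
  have hc : stdNormalCDF 0 = (μ (Set.Iic 0)).toReal := cdf_eq_real μ 0
  rw [hc]; linarith

lemma stdNormalCDF_tendsto_atBot : Tendsto stdNormalCDF atBot (nhds 0) :=
  tendsto_cdf_atBot (gaussianReal 0 1)

/-- **Theorem 5, under-mean case, `t/2 < r - c`.** For `R ∈ (0,1/2)` and
`γ < 2R`, the solutions `Yₙ` of `γ Φ(Yₙ) + (1-γ) Φ(√n Yₙ) = R` satisfy `Yₙ → 0`
(equivalently `Φ(Yₙ) → 1/2`) and `Φ(√n Yₙ) → (R - γ/2)/(1-γ)`. -/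
theorem limit_under_mean_below_cut
    (R γ : ℝ) (hR : R ∈ Set.Ioo (0 : ℝ) (1 / 2)) (hγ : γ ∈ Set.Ico (0 : ℝ) 1)
    (hcut : γ < 2 * R) (Y : ℕ → ℝ)
    (hY : ∀ n : ℕ, 1 ≤ n →
      γ * stdNormalCDF (Y n) + (1 - γ) * stdNormalCDF (Real.sqrt n * Y n) = R) :
    Tendsto Y atTop (nhds 0) ∧
      Tendsto (fun n : ℕ => stdNormalCDF (Y n)) atTop (nhds (1 / 2)) ∧
      Tendsto (fun n : ℕ => stdNormalCDF (Real.sqrt n * Y n)) atTop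
        (nhds ((R - γ / 2) / (1 - γ))) := by
  obtain ⟨hR0, hR2⟩ := hR
  obtain ⟨hγ0, hγ1⟩ := hγ
  have h1γ : (0:ℝ) < 1 - γ := by linarith
  -- Step A: Y n ≤ 0 for n ≥ 1
  have hYneg : ∀ n : ℕ, 1 ≤ n → Y n ≤ 0 := by
    intro n hn
    by_contra h
    push_neg at h
    have h1 : (1:ℝ)/2 ≤ stdNormalCDF (Y n) := by
      rw [← stdNormalCDF_zero]; exact stdNormalCDF_monotone h.le
    have h2 : (1:ℝ)/2 ≤ stdNormalCDF (Real.sqrt n * Y n) := by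
      rw [← stdNormalCDF_zero]
      exact stdNormalCDF_monotone (mul_nonneg (Real.sqrt_nonneg _) h.le)
    have := hY n hn
    nlinarith
  -- Step B: eventual lower bound
  have hlow : ∀ ε : ℝ, 0 < ε → ∀ᶠ n : ℕ in atTop, -ε < Y n := by
    intro ε hε
    have hsq : Tendsto (fun n : ℕ => Real.sqrt n * (-ε)) atTop atBot := by
      apply Tendsto.atTop_mul_const_of_neg (by linarith : -ε < 0)
      have hst : Tendsto Real.sqrt atTop atTop := by
        rw [tendsto_atTop_atTop]
        intro b
        refine ⟨max (b ^ 2) 0, fun a ha => ?_⟩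
        rcases le_or_gt b 0 with hb | hb
        · exact hb.trans (Real.sqrt_nonneg a)
        · have hba : b ^ 2 ≤ a := le_trans (le_max_left _ _) ha
          calc b = Real.sqrt (b ^ 2) := by rw [Real.sqrt_sq hb.le]
          _ ≤ Real.sqrt a := Real.sqrt_le_sqrt hba
      exact hst.comp tendsto_natCast_atTop_atTop
    have hΦ : Tendsto (fun n : ℕ => stdNormalCDF (Real.sqrt n * (-ε))) atTop (nhds 0) :=
      stdNormalCDF_tendsto_atBot.comp hsq
    have hδ : 0 < (R - γ / 2) / (1 - γ) := div_pos (by linarith) h1γ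
    have hsmall : ∀ᶠ n : ℕ in atTop,
        stdNormalCDF (Real.sqrt n * (-ε)) < (R - γ / 2) / (1 - γ) := by
      have := hΦ.eventually (eventually_lt_nhds hδ)
      exact this
    filter_upwards [hsmall, eventually_ge_atTop 1] with n hs hn
    by_contra h
    push_neg at h
    have hYn : Y n ≤ -ε := h
    have hb1 : stdNormalCDF (Y n) ≤ 1/2 := by
      rw [← stdNormalCDF_zero]
      exact stdNormalCDF_monotone (by linarith)
    have hb2 : stdNormalCDF (Real.sqrt n * Y n) ≤ stdNormalCDF (Real.sqrt n * (-ε)) :=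
      stdNormalCDF_monotone (mul_le_mul_of_nonneg_left hYn (Real.sqrt_nonneg _))
    have heq := hY n hn
    have hlt : stdNormalCDF (Real.sqrt n * (-ε)) * (1 - γ) < R - γ / 2 :=
      (lt_div_iff₀ h1γ).mp hs
    nlinarith [hb1, hb2, hγ0, h1γ]
  -- Tendsto Y → 0
  have hY0 : Tendsto Y atTop (nhds 0) := by
    rw [Metric.tendsto_atTop]
    intro ε hε
    have := (hlow ε hε).and (eventually_ge_atTop 1)
    rw [eventually_atTop] at this
    obtain ⟨N, hN⟩ := this
    refine ⟨N, fun n hn => ?_⟩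
    obtain ⟨h1, h2⟩ := hN n hn
    rw [Real.dist_eq, sub_zero, abs_lt]
    exact ⟨h1, lt_of_le_of_lt (hYneg n h2) hε⟩
  have hΦY : Tendsto (fun n : ℕ => stdNormalCDF (Y n)) atTop (nhds (1 / 2)) := by
    have := (stdNormalCDF_continuous.tendsto 0).comp hY0
    rwa [stdNormalCDF_zero] at this
  refine ⟨hY0, hΦY, ?_⟩
  have heq : ∀ᶠ n : ℕ in atTop,
      stdNormalCDF (Real.sqrt n * Y n) = (R - γ * stdNormalCDF (Y n)) / (1 - γ) := by
    filter_upwards [eventually_ge_atTop 1] with n hn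
    have := hY n hn
    field_simp
    linarith
  have hlim : Tendsto (fun n : ℕ => (R - γ * stdNormalCDF (Y n)) / (1 - γ)) atTop
      (nhds ((R - γ / 2) / (1 - γ))) := by
    have : Tendsto (fun n : ℕ => R - γ * stdNormalCDF (Y n)) atTop (nhds (R - γ * (1/2))) :=
      tendsto_const_nhds.sub (tendsto_const_nhds.mul hΦY)
    have h := this.div_const (1 - γ)
    convert h using 2
    ring
  exact hlim.congr' (heq.mono fun n h => h.symm)
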